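/- For the regex α = ((x{a⁺} y{b⁺}) | y{a⁺}) (x d)⁺ y over Σ = {a,b,d}, the dereferenced language equals {aⁿ bᵐ (aⁿ d)ᵏ bᵐ | n,m,k ≥ 1} ∪ {aⁿ dᵏ aⁿ | n,k ≥ 1}. -/

import Mathlib

/-!
Between ⟨x and ⟩x only x is open, so a capture block appends its letters to the output, stores
them in x, and leaves every variable closed again. From a state with all variables closed, a
recall just appends the stored word. In the second alternative x is never bound, so each recall
of x contributes ε and the loop (x d)⁺ yields dᵏ.
-/

/-- The alphabet {a, b, d}. -/
inductive ABD where
  | a | b | d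
deriving DecidableEq

/-- Symbols of ref-words over alphabet S and variables X. -/
inductive RSym (S X : Type) where
  | sym (a : S)
  | recall (x : X)
  | openB (x : X)
  | closeB (x : X)
deriving DecidableEq

/-- State of the dereferencing process: output so far, current contents of each
variable, and which variables are currently open. -/
structure DState (S X : Type) where
  out : List S
  env : X → List S
  opn : X → Bool

/-- One step of dereferencing: terminals and recalled contents are appended to
the output and to all open variables; ⟨x resets x's content and opens it;
⟩x closes x.  A recall of an unbound variable contributes ε. -/
def Dstep {S X : Type} [DecidableEq X] (st : DState S X) : RSym S X → DState S X
  | .sym a => ⟨st.out ++ [a],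
      fun y => if st.opn y then st.env y ++ [a] else st.env y, st.opn⟩
  | .recall x => ⟨st.out ++ st.env x,
      fun y => if st.opn y then st.env y ++ st.env x else st.env y, st.opn⟩
  | .openB x => ⟨st.out, Function.update st.env x [], Function.update st.opn x true⟩
  | .closeB x => ⟨st.out, st.env, Function.update st.opn x false⟩

/-- The dereference of a ref-word: each recall is replaced by the content of the
closest matching bracket pair to its left (ε if none), brackets are erased. -/
def deref {S X : Type} [DecidableEq X] (w : List (RSym S X)) : List S :=
  (w.foldl Dstep ⟨[], fun _ => [], fun _ => false⟩).out

/-- The two variables: `x` and `y`. -/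
def xv : Fin 2 := 0
def yv : Fin 2 := 1

/-- The ref-language of α = ((x{a⁺} y{b⁺}) | y{a⁺}) (x d)⁺ y. -/
def RefL : Set (List (RSym ABD (Fin 2))) :=
  { w | ∃ n m k : ℕ, 1 ≤ n ∧ 1 ≤ m ∧ 1 ≤ k ∧
      w = [RSym.openB xv] ++ List.replicate n (RSym.sym ABD.a) ++ [RSym.closeB xv] ++
          [RSym.openB yv] ++ List.replicate m (RSym.sym ABD.b) ++ [RSym.closeB yv] ++
          (List.replicate k [RSym.recall xv, RSym.sym ABD.d]).flatten ++
          [RSym.recall yv] } ∪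
  { w | ∃ n k : ℕ, 1 ≤ n ∧ 1 ≤ k ∧
      w = [RSym.openB yv] ++ List.replicate n (RSym.sym ABD.a) ++ [RSym.closeB yv] ++
          (List.replicate k [RSym.recall xv, RSym.sym ABD.d]).flatten ++
          [RSym.recall yv] }

namespace DState

variable {S X : Type} [DecidableEq X]

def closed (out : List S) (env : X → List S) : DState S X := ⟨out, env, fun _ => false⟩

theorem foldl_Dstep_map_sym (st : DState S X) (u : List S) :
    (u.map RSym.sym).foldl Dstep st =
      ⟨st.out ++ u, fun y => if st.opn y then st.env y ++ u else st.env y, st.opn⟩ := by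
  induction u generalizing st with
  | nil => cases st; simp
  | cons c u ih =>
    simp only [List.map_cons, List.foldl_cons, ih, Dstep, mk.injEq, List.append_assoc,
      List.cons_append, List.nil_append, true_and, and_true]
    funext y
    split <;> simp

theorem foldl_Dstep_capture (x : X) (u : List S) (out : List S) (env : X → List S) :
    ([RSym.openB x] ++ u.map RSym.sym ++ [RSym.closeB x]).foldl Dstep (closed out env) =
      closed (out ++ u) (Function.update env x u) := by
  simp only [List.foldl_append, List.foldl_cons, List.foldl_nil, foldl_Dstep_map_sym, Dstep,
    closed, mk.injEq, true_and]
  refine ⟨funext fun y => ?_, funext fun y => ?_⟩ <;> by_cases hy : y = x <;>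
    simp [Function.update, hy]

theorem Dstep_closed_recall (x : X) (out : List S) (env : X → List S) :
    Dstep (closed out env) (RSym.recall x) = closed (out ++ env x) env := by
  simp [Dstep, closed]

theorem Dstep_closed_sym (c : S) (out : List S) (env : X → List S) :
    Dstep (closed out env) (RSym.sym c) = closed (out ++ [c]) env := by
  simp [Dstep, closed]

theorem foldl_Dstep_recall_sym_replicate (x : X) (c : S) (k : ℕ) (out : List S)
    (env : X → List S) :
    (List.replicate k [RSym.recall x, RSym.sym c]).flatten.foldl Dstep (closed out env) =
      closed (out ++ (List.replicate k (env x ++ [c])).flatten) env := by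
  induction k generalizing out with
  | zero => simp
  | succ k ih =>
    simp only [List.replicate_succ, List.flatten_cons, List.foldl_cons, Dstep_closed_recall,
      Dstep_closed_sym, ih, List.append_assoc, List.cons_append, List.nil_append]

end DState

open DState

theorem deref_eq_foldl_closed {S X : Type} [DecidableEq X] (w : List (RSym S X)) :
    deref w = (w.foldl Dstep (closed [] fun _ => [])).out := rfl

theorem deref_capture_capture_recall {S : Type} (u v : List S) (c : S) (k : ℕ) :
    deref ([RSym.openB xv] ++ u.map RSym.sym ++ [RSym.closeB xv] ++
        ([RSym.openB yv] ++ v.map RSym.sym ++ [RSym.closeB yv]) ++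
        (List.replicate k [RSym.recall xv, RSym.sym c]).flatten ++ [RSym.recall yv]) =
      u ++ v ++ (List.replicate k (u ++ [c])).flatten ++ v := by
  rw [deref_eq_foldl_closed, List.foldl_append, List.foldl_append, List.foldl_append,
    foldl_Dstep_capture, foldl_Dstep_capture, foldl_Dstep_recall_sym_replicate, List.foldl_cons,
    List.foldl_nil, Dstep_closed_recall]
  simp [closed, Function.update, xv, yv]

theorem deref_capture_recall {S : Type} (u : List S) (c : S) (k : ℕ) :
    deref ([RSym.openB yv] ++ u.map RSym.sym ++ [RSym.closeB yv] ++
        (List.replicate k [RSym.recall xv, RSym.sym c]).flatten ++ [RSym.recall yv]) =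
      u ++ List.replicate k c ++ u := by
  rw [deref_eq_foldl_closed, List.foldl_append, List.foldl_append,
    foldl_Dstep_capture, foldl_Dstep_recall_sym_replicate, List.foldl_cons, List.foldl_nil,
    Dstep_closed_recall]
  simp [closed, Function.update, xv, yv, List.flatten_replicate_singleton]

theorem deref_refL_word_xy (n m k : ℕ) :
    deref ([RSym.openB xv] ++ List.replicate n (RSym.sym ABD.a) ++ [RSym.closeB xv] ++
          [RSym.openB yv] ++ List.replicate m (RSym.sym ABD.b) ++ [RSym.closeB yv] ++
          (List.replicate k [RSym.recall xv, RSym.sym ABD.d]).flatten ++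
          [RSym.recall yv]) =
      List.replicate n ABD.a ++ List.replicate m ABD.b ++
        (List.replicate k (List.replicate n ABD.a ++ [ABD.d])).flatten ++
        List.replicate m ABD.b := by
  simpa only [List.append_assoc, List.map_replicate] using
    deref_capture_capture_recall (.replicate n ABD.a) (.replicate m ABD.b) ABD.d k

theorem deref_refL_word_y (n k : ℕ) :
    deref ([RSym.openB yv] ++ List.replicate n (RSym.sym ABD.a) ++ [RSym.closeB yv] ++
          (List.replicate k [RSym.recall xv, RSym.sym ABD.d]).flatten ++
          [RSym.recall yv]) =
      List.replicate n ABD.a ++ List.replicate k ABD.d ++ List.replicate n ABD.a := by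
  simpa only [List.map_replicate] using deref_capture_recall (.replicate n ABD.a) ABD.d k

/-- The dereferenced language of α = ((x{a⁺} y{b⁺}) | y{a⁺}) (x d)⁺ y equals
{aⁿ bᵐ (aⁿ d)ᵏ bᵐ | n,m,k ≥ 1} ∪ {aⁿ dᵏ aⁿ | n,k ≥ 1}. -/
theorem regex_example_language :
    deref '' RefL =
      { z : List ABD | ∃ n m k : ℕ, 1 ≤ n ∧ 1 ≤ m ∧ 1 ≤ k ∧
          z = List.replicate n ABD.a ++ List.replicate m ABD.b ++
              (List.replicate k (List.replicate n ABD.a ++ [ABD.d])).flatten ++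
              List.replicate m ABD.b } ∪
      { z : List ABD | ∃ n k : ℕ, 1 ≤ n ∧ 1 ≤ k ∧
          z = List.replicate n ABD.a ++ List.replicate k ABD.d ++
              List.replicate n ABD.a } := by
  ext z
  constructor
  · rintro ⟨w, (⟨n, m, k, hn, hm, hk, rfl⟩ | ⟨n, k, hn, hk, rfl⟩), rfl⟩
    · exact Or.inl ⟨n, m, k, hn, hm, hk, deref_refL_word_xy n m k⟩
    · exact Or.inr ⟨n, k, hn, hk, deref_refL_word_y n k⟩
  · rintro (⟨n, m, k, hn, hm, hk, rfl⟩ | ⟨n, k, hn, hk, rfl⟩)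
    · exact ⟨_, Or.inl ⟨n, m, k, hn, hm, hk, rfl⟩, deref_refL_word_xy n m k⟩
    · exact ⟨_, Or.inr ⟨n, k, hn, hk, rfl⟩, deref_refL_word_y n k⟩
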